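/- Let σ = {σ_i : i ∈ I} be a partition of the set of all primes, and let A be a σ-subnormal subgroup of a finite group G. If A is a σ_i-group for some i ∈ I, then A ≤ O_{σ_i}(G), where O_{σ_i}(G) is the largest normal σ_i-subgroup of G. (Lemma 2.7) -/

import Mathlib

/-!
Induction on `|G|`. Since `O_{σ_i}(G / O_{σ_i}(G)) = 1`, passing to that quotient reduces to the
case `O_{σ_i}(G) = 1`, where `A = 1` must be shown. Let `M` be the last proper term of a
σ-subnormal chain through `A`; by induction `A ≤ D := O_{σ_i}(M)`, and induction also settles the
case that `A` lies in a proper normal subgroup. So `M` is not normal, `G / M_G` is `σ_j`-primary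
and `A ≰ N := M_G`, which forces `j = i`. Now `D ∩ N` is a normal `σ_i`-subgroup of `N`, hence
trivial, so `D` centralizes `N`. If `C_G(N) < G` we conclude by induction; otherwise `N` is a
central `σ_i'`-subgroup with `σ_i`-quotient, and a Schur–Zassenhaus complement to `N` is a
nontrivial normal `σ_i`-subgroup of `G`.
-/

/-- A `π`-group: every prime dividing the order of `G` lies in `π`. -/
def IsPiGroup (π : Set ℕ) (G : Type*) [Group G] : Prop :=
  ∀ p : ℕ, p.Prime → p ∣ Nat.card G → p ∈ π

/-- `σ` is a partition of the set of all primes: each block consists of primes and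
every prime belongs to exactly one block. -/
def IsPrimePartition {ι : Type*} (σ : ι → Set ℕ) : Prop :=
  (∀ i, ∀ p ∈ σ i, p.Prime) ∧ ∀ p : ℕ, p.Prime → ∃! i, p ∈ σ i

/-- A σ-primary group: a `σ i`-group for some `i`. -/
def SigmaPrimary {ι : Type*} (σ : ι → Set ℕ) (G : Type*) [Group G] : Prop :=
  ∃ i, IsPiGroup (σ i) G

/-- A σ-nilpotent group: an internal direct product of σ-primary groups, i.e. there are
normal σ-primary subgroups which are independent and generate the whole group. -/
def SigmaNilpotent {ι : Type*} (σ : ι → Set ℕ) (G : Type*) [Group G] : Prop :=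
  ∃ (n : ℕ) (N : Fin n → Subgroup G),
    (∀ j, (N j).Normal) ∧ (∀ j, SigmaPrimary σ (N j)) ∧
    iSupIndep N ∧ (⨆ j, N j) = ⊤

/-- `A` is σ-subnormal in `G`: there is a chain `A = A₀ ≤ ⋯ ≤ Aₙ = G` with each
term either normal in the next or with σ-primary quotient `Aᵢ₊₁/(Aᵢ)_{Aᵢ₊₁}`. -/
def SigmaSubnormal {ι : Type*} (σ : ι → Set ℕ) {G : Type*} [Group G] (A : Subgroup G) : Prop :=
  ∃ (n : ℕ) (c : ℕ → Subgroup G), c 0 = A ∧ c n = ⊤ ∧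
    ∀ i < n, c i ≤ c (i + 1) ∧
      (((c i).subgroupOf (c (i + 1))).Normal ∨
        SigmaPrimary σ ((c (i + 1)) ⧸ ((c i).subgroupOf (c (i + 1))).normalCore))

/-- Auxiliary: a supremum of normal subgroups is normal. -/
theorem normal_iSup_of_normal {G : Type*} [Group G] {ι : Sort*} (f : ι → Subgroup G)
    (h : ∀ i, (f i).Normal) : (⨆ i, f i).Normal := by
  constructor
  intro n hn g
  refine Subgroup.iSup_induction (C := fun x => g * x * g⁻¹ ∈ ⨆ i, f i) f hn
    (fun i x hx => ?_) (by simpa using Subgroup.one_mem _) (fun x y hx hy => ?_)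
  · exact le_iSup f i ((h i).conj_mem x hx g)
  · have := Subgroup.mul_mem _ hx hy
    simpa [mul_assoc] using this

/-- `O_π(G)`: the join of all normal `π`-subgroups of `G` (the largest normal
`π`-subgroup of `G`). -/
def piCore (π : Set ℕ) (G : Type*) [Group G] : Subgroup G :=
  ⨆ N : {N : Subgroup G // N.Normal ∧ IsPiGroup π N}, (N : Subgroup G)


namespace Subgroup

variable {G G' : Type*} [Group G] [Group G']

theorem card_lt_card_of_ne_top [Finite G] {K : Subgroup G} (hK : K ≠ ⊤) :
    Nat.card K < Nat.card G := by
  rw [← K.card_mul_index]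
  exact lt_mul_of_one_lt_right Nat.card_pos (one_lt_index_of_ne_top hK)

theorem card_quotient_lt_card_of_ne_bot [Finite G] {N : Subgroup G} (hN : N ≠ ⊥) :
    Nat.card (G ⧸ N) < Nat.card G := by
  rw [card_eq_card_quotient_mul_card_subgroup N]
  exact lt_mul_of_one_lt_right Nat.card_pos ((one_lt_card_iff_ne_bot N).mpr hN)

theorem index_normalCore_comap_dvd (f : G →* G') (T : Subgroup G') :
    (T.comap f).normalCore.index ∣ T.normalCore.index := by
  have hle : T.normalCore.comap f ≤ (T.comap f).normalCore :=
    normal_le_normalCore.mpr (comap_mono (normalCore_le T))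
  refine (index_dvd_of_le hle).trans ?_
  rw [index_comap]
  exact relIndex_dvd_index_of_normal _ _

theorem index_normalCore_dvd_of_surjective {f : G →* G'} (hf : Function.Surjective f)
    {T : Subgroup G} {T' : Subgroup G'} (h : T.map f ≤ T') :
    T'.normalCore.index ∣ T.normalCore.index := by
  rw [← index_comap_of_surjective (H := T'.normalCore) hf]
  refine index_dvd_of_le (map_le_iff_le_comap.mp ?_)
  have := (normalCore_normal T).map f hf
  exact normal_le_normalCore.mpr ((map_mono (normalCore_le T)).trans h)

theorem le_normalizer_map_subtype {K : Subgroup G} (H : Subgroup K) [H.Normal] :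
    K ≤ normalizer (H.map K.subtype) := fun k hk =>
  le_normalizer_map K.subtype ⟨⟨k, hk⟩, by rw [normalizer_eq_top H]; trivial, rfl⟩

theorem normal_of_le_center {N : Subgroup G} (hN : N ≤ center G) : N.Normal :=
  ⟨fun n hn g => by rwa [mem_center_iff.mp (hN hn) g, mul_inv_cancel_right]⟩

theorem le_centralizer_of_inf_eq_bot {D N : Subgroup G} (hD : D ≤ normalizer N)
    (hN : N ≤ normalizer D) (h : D ⊓ N = ⊥) : D ≤ centralizer (N : Set G) := by
  intro d hd
  rw [mem_centralizer_iff]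
  intro n hn
  have hD' : n * d * n⁻¹ * d⁻¹ ∈ D :=
    D.mul_mem ((mem_normalizer_iff.mp (hN hn) d).mp hd) (D.inv_mem hd)
  have hN' : n * d * n⁻¹ * d⁻¹ ∈ N := by
    simpa only [mul_assoc] using
      N.mul_mem hn ((mem_normalizer_iff.mp (hD hd) _).mp (N.inv_mem hn))
  have h1 : n * d * n⁻¹ * d⁻¹ = 1 := by
    simpa only [h, mem_bot] using mem_inf.mpr ⟨hD', hN'⟩
  rwa [mul_inv_eq_one, mul_inv_eq_iff_eq_mul] at h1

end Subgroup

open Subgroup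

section PiGroup

variable {π : Set ℕ}

theorem IsPiGroup.of_card_dvd {H K : Type*} [Group H] [Group K]
    (h : Nat.card H ∣ Nat.card K) (hK : IsPiGroup π K) : IsPiGroup π H :=
  fun p hp hpH => hK p hp (hpH.trans h)

theorem IsPiGroup.of_card_dvd_mul {H K L : Type*} [Group H] [Group K] [Group L]
    (h : Nat.card H ∣ Nat.card K * Nat.card L) (hK : IsPiGroup π K) (hL : IsPiGroup π L) :
    IsPiGroup π H :=
  fun p hp hpH => (hp.dvd_mul.mp (hpH.trans h)).elim (hK p hp) (hL p hp)

variable {G Q : Type*} [Group G] [Group Q]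

theorem isPiGroup_bot : IsPiGroup π (⊥ : Subgroup G) := by
  intro p hp hpG
  rw [card_bot, Nat.dvd_one] at hpG
  exact absurd hpG hp.ne_one

theorem IsPiGroup.of_map_of_ker_le [Finite G] {H N : Subgroup G} (f : G →* Q)
    (hmap : IsPiGroup π (H.map f)) (hN : f.ker ≤ N) (hNπ : IsPiGroup π N) : IsPiGroup π H := by
  refine IsPiGroup.of_card_dvd_mul (K := (f.domRestrict H).ker) (L := H.map f) ?_
    (hNπ.of_card_dvd ?_) hmap
  · rw [← f.domRestrict_range H, ← index_ker, card_mul_index]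
  · exact (card_comap_dvd_of_injective f.ker H.subtype H.subtype_injective).trans
      (card_dvd_of_le hN)

theorem isPiGroup_sup [Finite G] {H K : Subgroup G} [H.Normal] (hH : IsPiGroup π H)
    (hK : IsPiGroup π K) : IsPiGroup π ↥(H ⊔ K) := by
  refine IsPiGroup.of_map_of_ker_le (QuotientGroup.mk' H) ?_ (QuotientGroup.ker_mk' H).le hH
  rw [Subgroup.map_sup, QuotientGroup.map_mk'_self, bot_sup_eq]
  exact hK.of_card_dvd (card_map_dvd K _)

end PiGroup

section PiCore

variable {π : Set ℕ} {G : Type*} [Group G]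

theorem le_piCore {N : Subgroup G} (hN : N.Normal) (hNπ : IsPiGroup π N) : N ≤ piCore π G :=
  le_iSup (fun N : {N : Subgroup G // N.Normal ∧ IsPiGroup π N} => (N : Subgroup G)) ⟨N, hN, hNπ⟩

instance piCore_characteristic : (piCore π G).Characteristic := by
  refine characteristic_iff_map_le.mpr fun ϕ => ?_
  rw [piCore, Subgroup.map_iSup]
  exact iSup_le fun N => le_piCore (N.2.1.map _ ϕ.surjective)
    (N.2.2.of_card_dvd (card_map_of_injective ϕ.injective).dvd)

theorem isPiGroup_piCore [Finite G] : IsPiGroup π (piCore π G) := by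
  have := Fintype.ofFinite {N : Subgroup G // N.Normal ∧ IsPiGroup π N}
  rw [piCore, ← Finset.sup_univ_eq_iSup]
  refine (Finset.sup_induction (p := fun H : Subgroup G => H.Normal ∧ IsPiGroup π H)
    ⟨inferInstance, isPiGroup_bot⟩ ?_ fun N _ => N.2).2
  rintro H ⟨hH, hHπ⟩ K ⟨hK, hKπ⟩
  exact ⟨inferInstance, isPiGroup_sup hHπ hKπ⟩

theorem isPiGroup_map_subtype_piCore [Finite G] (K : Subgroup G) :
    IsPiGroup π ((piCore π K).map K.subtype) :=
  isPiGroup_piCore.of_card_dvd (card_map_of_injective K.subtype_injective).dvd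

theorem map_subtype_piCore_le [Finite G] {K : Subgroup G} [K.Normal] :
    (piCore π K).map K.subtype ≤ piCore π G :=
  le_piCore inferInstance (isPiGroup_map_subtype_piCore K)

theorem le_map_subtype_piCore {H K : Subgroup G} (hHK : H ≤ K) (hK : K ≤ normalizer H)
    (hH : IsPiGroup π H) : H ≤ (piCore π K).map K.subtype := by
  have hle := le_piCore ((normal_subgroupOf_iff_le_normalizer hHK).mpr hK)
    (hH.of_card_dvd (card_comap_dvd_of_injective H K.subtype K.subtype_injective))
  exact map_subgroupOf_eq_of_le hHK ▸ map_mono hle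

theorem piCore_quotient_piCore_eq_bot [Finite G] : piCore π (G ⧸ piCore π G) = ⊥ := by
  set W := piCore π G
  have hcomap : (piCore π (G ⧸ W)).comap (QuotientGroup.mk' W) ≤ W :=
    le_piCore inferInstance <| IsPiGroup.of_map_of_ker_le (QuotientGroup.mk' W)
      (isPiGroup_piCore.of_card_dvd (card_dvd_of_le (map_comap_le _ _)))
      (QuotientGroup.ker_mk' W).le isPiGroup_piCore
  rw [← map_comap_eq_self_of_surjective (QuotientGroup.mk'_surjective W) (piCore π (G ⧸ W)),
    eq_bot_iff, ← QuotientGroup.map_mk'_self W]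
  exact map_mono hcomap

end PiCore

section SigmaSubnormal

variable {ι : Type*} {σ : ι → Set ℕ} {G G' : Type*} [Group G] [Group G']

theorem SigmaPrimary.of_card_dvd {H K : Type*} [Group H] [Group K]
    (h : Nat.card H ∣ Nat.card K) (hK : SigmaPrimary σ K) : SigmaPrimary σ H :=
  let ⟨i, hi⟩ := hK
  ⟨i, hi.of_card_dvd h⟩

def IsSigmaLink (σ : ι → Set ℕ) (H K : Subgroup G) : Prop :=
  (H.subgroupOf K).Normal ∨ SigmaPrimary σ (K ⧸ (H.subgroupOf K).normalCore)

theorem IsSigmaLink.comap {H K : Subgroup G'} (f : G →* G') (hHK : H ≤ K)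
    (h : IsSigmaLink σ H K) : IsSigmaLink σ (H.comap f) (K.comap f) := by
  rcases h with hN | hP
  · left
    rw [normal_subgroupOf_iff_le_normalizer hHK] at hN
    rw [normal_subgroupOf_iff_le_normalizer (comap_mono hHK)]
    exact (comap_mono hN).trans (le_normalizer_comap f)
  · exact .inr (hP.of_card_dvd (index_normalCore_comap_dvd (f.subgroupComap K) (H.subgroupOf K)))

theorem IsSigmaLink.map {H K : Subgroup G} (f : G →* G') (hHK : H ≤ K)
    (h : IsSigmaLink σ H K) : IsSigmaLink σ (H.map f) (K.map f) := by
  rcases h with hN | hP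
  · left
    rw [normal_subgroupOf_iff_le_normalizer hHK] at hN
    rw [normal_subgroupOf_iff_le_normalizer (map_mono hHK)]
    exact (map_mono hN).trans (le_normalizer_map f)
  · refine .inr (hP.of_card_dvd (index_normalCore_dvd_of_surjective
      (f.subgroupMap_surjective K) ?_))
    rintro _ ⟨x, hx, rfl⟩
    exact ⟨x, hx, rfl⟩

theorem IsSigmaLink.top {M : Subgroup G} (h : IsSigmaLink σ M ⊤) :
    M.Normal ∨ SigmaPrimary σ (G ⧸ M.normalCore) := by
  rcases h with hN | hP
  · rw [normal_subgroupOf_iff_le_normalizer le_top, top_le_iff, normalizer_eq_top_iff] at hN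
    exact .inl hN
  · refine .inr (hP.of_card_dvd (index_normalCore_dvd_of_surjective
      (f := (⊤ : Subgroup G).subtype) (fun g => ⟨⟨g, mem_top g⟩, rfl⟩) ?_))
    rw [subgroupOf_map_subtype]
    exact inf_le_left

theorem SigmaSubnormal.comap {A : Subgroup G'} (f : G →* G') (hA : SigmaSubnormal σ A) :
    SigmaSubnormal σ (A.comap f) := by
  obtain ⟨n, c, h0, hn, hc⟩ := hA
  refine ⟨n, fun k => (c k).comap f, congrArg _ h0, by simp only [hn, comap_top], fun k hk => ?_⟩
  exact ⟨comap_mono (hc k hk).1, IsSigmaLink.comap f (hc k hk).1 (hc k hk).2⟩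

theorem SigmaSubnormal.map {A : Subgroup G} {f : G →* G'} (hf : Function.Surjective f)
    (hA : SigmaSubnormal σ A) : SigmaSubnormal σ (A.map f) := by
  obtain ⟨n, c, h0, hn, hc⟩ := hA
  refine ⟨n, fun k => (c k).map f, congrArg _ h0,
    by simp only [hn, map_top_of_surjective f hf], fun k hk => ?_⟩
  exact ⟨map_mono (hc k hk).1, IsSigmaLink.map f (hc k hk).1 (hc k hk).2⟩

theorem SigmaSubnormal.eq_top_or_exists {A : Subgroup G} (hA : SigmaSubnormal σ A) :
    A = ⊤ ∨ ∃ M : Subgroup G, A ≤ M ∧ M ≠ ⊤ ∧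
      (M.Normal ∨ SigmaPrimary σ (G ⧸ M.normalCore)) := by
  obtain ⟨n, c, h0, hn, hc⟩ := hA
  have hAc : ∀ k ≤ n, A ≤ c k := by
    intro k hk
    induction k with
    | zero => exact h0.ge
    | succ k ih => exact (ih (by omega)).trans (hc k (by omega)).1
  classical
  have hex : ∃ k, c k = ⊤ := ⟨n, hn⟩
  have hfirst : c (Nat.find hex) = ⊤ := Nat.find_spec hex
  have hle : Nat.find hex ≤ n := Nat.find_min' hex hn
  rcases hk : Nat.find hex with _ | m
  · exact .inl (h0 ▸ hk ▸ hfirst)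
  · have hmn : m < n := by omega
    have htop : c (m + 1) = ⊤ := hk ▸ hfirst
    have hlink : IsSigmaLink σ (c m) ⊤ := htop ▸ (hc m hmn).2
    exact .inr ⟨c m, hAc m hmn.le, Nat.find_min hex (by omega), hlink.top⟩

end SigmaSubnormal

section Center

variable {π : Set ℕ} {G : Type*} [Group G]

theorem le_centralizer_of_piCore_eq_bot [Finite G] {D N : Subgroup G} [N.Normal]
    (h : piCore π G = ⊥) (hDπ : IsPiGroup π D) (hND : N ≤ normalizer D) :
    D ≤ centralizer (N : Set G) := by
  have hN : N ≤ normalizer (D ⊓ N : Set G) :=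
    (le_inf hND (normalizer_eq_top N ▸ le_top)).trans inf_normalizer_le_normalizer_inf
  have hDN : D ⊓ N = ⊥ := le_bot_iff.mp <| h ▸
    (le_map_subtype_piCore inf_le_right hN (hDπ.of_card_dvd (card_dvd_of_le inf_le_left))).trans
      map_subtype_piCore_le
  exact le_centralizer_of_inf_eq_bot (normalizer_eq_top N ▸ le_top) hND hDN

theorem isPiGroup_compl_of_le_center [Finite G] {N : Subgroup G} (hN : N ≤ center G)
    (h : piCore π G = ⊥) : IsPiGroup πᶜ N := by
  intro p hp hpN hpπ
  have := Fact.mk hp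
  obtain ⟨x, hx⟩ := exists_prime_orderOf_dvd_card' p hpN
  have hcard : Nat.card (zpowers (x : G)) = p := by rw [Nat.card_zpowers, orderOf_coe, hx]
  have hle : zpowers (x : G) ≤ piCore π G := by
    refine le_piCore (normal_of_le_center ((zpowers_le.mpr x.2).trans hN)) fun q hq hqx => ?_
    rw [hcard, Nat.prime_dvd_prime_iff_eq hq hp] at hqx
    exact hqx ▸ hpπ
  rw [h, le_bot_iff] at hle
  rw [hle, card_bot] at hcard
  exact hp.ne_one hcard.symm

theorem sup_piCore_eq_top_of_le_center [Finite G] {N : Subgroup G} [N.Normal]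
    (hN : N ≤ center G) (hNπ : IsPiGroup πᶜ N) (hGN : IsPiGroup π (G ⧸ N)) :
    N ⊔ piCore π G = ⊤ := by
  have hcop : (Nat.card N).Coprime N.index := Nat.coprime_of_dvd fun p hp hpN hpi =>
    hNπ p hp hpN (hGN p hp hpi)
  obtain ⟨H, hH⟩ := exists_right_complement'_of_coprime hcop
  have hHnormal : H.Normal := by
    rw [← normalizer_eq_top_iff, eq_top_iff, ← hH.sup_eq_top]
    exact sup_le (hN.trans (center_le_normalizer _)) le_normalizer
  have hHπ : IsPiGroup π H := hGN.of_card_dvd (hH.symm.index_eq_card ▸ dvd_rfl)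
  exact top_le_iff.mp (hH.sup_eq_top ▸ sup_le_sup_left (le_piCore hHnormal hHπ) N)

end Center

theorem IsPrimePartition.eq_of_isPiGroup {ι : Type*} {σ : ι → Set ℕ} (hσ : IsPrimePartition σ)
    {H : Type*} [Group H] [Finite H] [Nontrivial H] {i j : ι} (hi : IsPiGroup (σ i) H)
    (hj : IsPiGroup (σ j) H) : i = j := by
  obtain ⟨p, hp, hpH⟩ := Nat.exists_prime_and_dvd (Finite.one_lt_card (α := H)).ne'
  obtain ⟨k, -, hk⟩ := hσ.2 p hp
  exact (hk i (hi p hp hpH)).trans (hk j (hj p hp hpH)).symm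

theorem le_piCore_of_piCore_eq_bot {ι : Type*} {σ : ι → Set ℕ} (hσ : IsPrimePartition σ)
    {G : Type*} [Group G] [Finite G] {A M : Subgroup G} {i : ι} (hAi : IsPiGroup (σ i) A)
    (hAM : A ≤ M) (hM : M ≠ ⊤) (hMG : M.Normal ∨ SigmaPrimary σ (G ⧸ M.normalCore))
    (ih : ∀ K : Subgroup G, K ≠ ⊤ → A ≤ K → A ≤ (piCore (σ i) K).map K.subtype)
    (hW : piCore (σ i) G = ⊥) : A ≤ piCore (σ i) G := by
  rcases hMG with hMn | ⟨j, hj⟩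
  · exact (ih M hM hAM).trans map_subtype_piCore_le
  set N := M.normalCore
  have hNM : N ≤ M := normalCore_le M
  by_cases hAN : A ≤ N
  · exact (ih N (ne_top_of_le_ne_top hM hNM) hAN).trans map_subtype_piCore_le
  have hij : i = j := by
    have : Nontrivial (A.map (QuotientGroup.mk' N)) := by
      rwa [nontrivial_iff_ne_bot, Ne, Subgroup.map_eq_bot_iff, QuotientGroup.ker_mk']
    exact hσ.eq_of_isPiGroup (hAi.of_card_dvd (card_map_dvd A (QuotientGroup.mk' N)))
      (hj.of_card_dvd (card_subgroup_dvd_card _))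
  subst hij
  have hAC : A ≤ centralizer (N : Set G) := (ih M hM hAM).trans <|
    le_centralizer_of_piCore_eq_bot hW (isPiGroup_map_subtype_piCore M)
      (hNM.trans (le_normalizer_map_subtype _))
  by_cases hC : centralizer (N : Set G) = ⊤
  · have hNZ : N ≤ center G := centralizer_eq_top_iff_subset.mp hC
    have hNG := sup_piCore_eq_top_of_le_center hNZ (isPiGroup_compl_of_le_center hNZ hW) hj
    rw [hW, sup_bot_eq] at hNG
    exact absurd hNG (ne_top_of_le_ne_top hM hNM)
  · exact (ih _ hC hAC).trans map_subtype_piCore_le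

/-- Lemma 2.7: let `σ` be a partition of the primes and `A` a σ-subnormal subgroup of
`G`. If `A` is a `σ i`-group for some `i`, then `A ≤ O_{σ i}(G)`, the largest normal
`σ i`-subgroup of `G`. -/
theorem lemma2_7 {ι : Type} (σ : ι → Set ℕ) (hσ : IsPrimePartition σ)
    (G : Type) [Group G] [Finite G] (A : Subgroup G) (hA : SigmaSubnormal σ A)
    (i : ι) (hAi : IsPiGroup (σ i) A) :
    A ≤ piCore (σ i) G := by
  induction hG : Nat.card G using Nat.strong_induction_on generalizing G with
  | _ n ih =>
    subst hG
    by_cases hW : piCore (σ i) G = ⊥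
    · rcases hA.eq_top_or_exists with rfl | ⟨M, hAM, hM, hMG⟩
      · exact le_piCore inferInstance hAi
      refine le_piCore_of_piCore_eq_bot hσ hAi hAM hM hMG (fun K hK hAK => ?_) hW
      have hAK' := ih _ (card_lt_card_of_ne_top hK) K (A.subgroupOf K) (hA.comap K.subtype)
        (hAi.of_card_dvd (card_comap_dvd_of_injective A K.subtype K.subtype_injective)) rfl
      exact map_subgroupOf_eq_of_le hAK ▸ map_mono hAK'
    · have hmap := ih _ (card_quotient_lt_card_of_ne_bot hW) (G ⧸ piCore (σ i) G) _
        (hA.map (QuotientGroup.mk'_surjective _)) (hAi.of_card_dvd (card_map_dvd A _)) rfl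
      rwa [piCore_quotient_piCore_eq_bot, le_bot_iff, Subgroup.map_eq_bot_iff,
        QuotientGroup.ker_mk'] at hmap
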